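/- arXiv:2309.11190 — 9 statements merged into one kernel-verified Lean document; each statement's English description precedes it below -/
import Mathlib

section
/- Let λ_A = a_1 a_2 … a_n and λ_B = b_1 b_2 … b_n be a binary string of length n and its reversal (so b_i = a_{n+1−i}), with a_1 = 1, a_n = 1 (both endpoints occupied), total number of 1's at least 3, and λ_B ≤ λ_A lexicographically. If the robot at position n moves one step outside the segment (so the new strings of length n+1 are λ'_A = a_1 a_2 … a_{n−1} 0 a_n and λ'_{B'} = a_n 0 a_{n−1} … a_2 a_1), then λ'_{B'} < λ'_A strictly in lexicographic order. -/
/-! Write `w = 1 t 1`. Then `wᴿ ≤ w` says `tᴿ ≤ t`, and after the move the two words read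
`1 (0 tᴿ) 1` and `1 (t 0) 1`, so it suffices that `(t 0)ᴿ < t 0` whenever `tᴿ ≤ t` and `t`
contains a `1`. If `t` starts with `1` this is clear, since `(t 0)ᴿ` starts with `0`. If `t`
starts with `0`, then `tᴿ ≤ t` forces `t` to end with `0` as well; stripping these two `0`s
leaves a shorter word with the same two properties, and its inequality lifts back to `t`. -/

namespace List

variable {α : Type*} {r : α → α → Prop}

theorem Lex.append_of_length_eq {x y : List α} (h : Lex r x y) (hl : x.length = y.length)
    (z z' : List α) : Lex r (x ++ z) (y ++ z') := by
  induction h with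
  | nil => simp at hl
  | rel h => exact .rel h
  | cons _ ih => exact .cons (ih (by simpa using hl))

theorem eq_or_lex_of_lex_append {x y z z' : List α} (hl : x.length = y.length)
    (h : Lex r (x ++ z) (y ++ z')) : x = y ∨ Lex r x y := by
  induction x generalizing y with
  | nil => exact .inl (eq_nil_of_length_eq_zero hl.symm).symm
  | cons a x ih =>
    obtain _ | ⟨b, y⟩ := y
    · simp at hl
    cases h with
    | rel hab => exact .inr (.rel hab)
    | cons h => exact (ih (by simpa using hl) h).imp (congrArg _) .cons

theorem reverse_cons_append_singleton (a : α) (x : List α) :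
    (a :: (x ++ [a])).reverse = a :: (x.reverse ++ [a]) := by
  simp

theorem reverse_le_of_cons_append_singleton [Std.Irrefl r] {a : α} {x : List α}
    (h : (a :: (x ++ [a])).reverse = a :: (x ++ [a]) ∨
      Lex r (a :: (x ++ [a])).reverse (a :: (x ++ [a]))) :
    x.reverse = x ∨ Lex r x.reverse x := by
  rw [reverse_cons_append_singleton, cons_inj_right, append_left_inj, lex_cons_iff] at h
  exact h.elim .inl (eq_or_lex_of_lex_append length_reverse)

theorem eq_cons_append_singleton_of_head?_of_getLast? {l : List α} {a b : α}
    (ha : l.head? = some a) (hb : l.getLast? = some b) (hl : 2 ≤ l.length) :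
    ∃ t, l = a :: (t ++ [b]) := by
  obtain ⟨l', rfl⟩ := head?_eq_some_iff.mp ha
  have hne : l' ≠ [] := by rintro rfl; simp at hl
  rw [getLast?_cons, getLast?_eq_some_getLast hne, Option.getD_some, Option.some_inj] at hb
  exact ⟨l'.dropLast, by rw [← hb, dropLast_append_getLast]⟩

end List

open List

theorem lex_reverse_append_false {x : List Bool} (hx : true ∈ x)
    (hle : x.reverse = x ∨ Lex (· < ·) x.reverse x) :
    Lex (· < ·) (x ++ [false]).reverse (x ++ [false]) := by
  rw [reverse_append, reverse_singleton, singleton_append]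
  match x, hx, hle with
  | true :: _, _, _ => exact .rel (by decide)
  | false :: x, hx, hle =>
    obtain ⟨y, b, rfl⟩ : ∃ y b, x = y ++ [b] := by
      obtain rfl | hx' := eq_nil_or_concat x
      · simp at hx
      · simpa using hx'
    obtain rfl : b = false := by
      cases b
      · rfl
      · rw [reverse_cons, reverse_append, reverse_singleton, singleton_append] at hle
        obtain h | h := hle
        · simp at h
        · cases h with
          | rel h => exact absurd h (by decide)
    have hy : true ∈ y := by simpa using hx
    have ih := lex_reverse_append_false hy (reverse_le_of_cons_append_singleton hle)
    rw [reverse_append, reverse_singleton, singleton_append] at ih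
    rw [reverse_cons_append_singleton]
    exact .cons (ih.append_of_length_eq (by simp) [false] [false])
termination_by x.length

/-- If both endpoints of a binary word are occupied, there are at least three 1's,
and the reversal is lexicographically ≤ the word, then after the tail robot moves one
step outside (inserting a 0 before the final 1), the reversal of the new word is
strictly lexicographically smaller than the new word. -/
theorem tail_move_out_strict (w : List Bool)
    (hhead : w.head? = some true) (hlast : w.getLast? = some true)
    (hcount : 3 ≤ w.count true)
    (hle : w.reverse = w ∨ List.Lex (· < ·) w.reverse w) :
    List.Lex (· < ·) (w.dropLast ++ [false, true]).reverse (w.dropLast ++ [false, true]) := by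
  obtain ⟨t, rfl⟩ := eq_cons_append_singleton_of_head?_of_getLast? hhead hlast
    (le_trans (by norm_num) (hcount.trans count_le_length))
  have ht : true ∈ t := by
    rw [count_cons, count_append] at hcount
    exact count_pos_iff.mp (by simpa using hcount)
  have key := lex_reverse_append_false ht (reverse_le_of_cons_append_singleton hle)
  have hmoved : (true :: (t ++ [true])).dropLast ++ [false, true] =
      true :: (t ++ [false] ++ [true]) := by
    rw [← cons_append, dropLast_concat, append_assoc, cons_append]; rfl
  rw [hmoved, reverse_cons_append_singleton]
  exact .cons (key.append_of_length_eq (by simp) [true] [true])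
end

section
/- Suppose a finite set S ⊆ ℤ with |S| ≥ 3 has distinct occupancy strings λ_B < λ_A from the endpoints of its smallest enclosing segment (so max S is the 'tail'). If an interior robot r ∈ S with min S < r < max S and r − 1 ∉ S moves one step left (S is replaced by S' = (S \ {r}) ∪ {r − 1}), then the smallest enclosing segment of S' equals that of S, and the new strings still satisfy λ'_B < λ'_A; in particular S' is still asymmetric and the tail is unchanged. -/
/-!
Moving the robot at `r` to the vacant cell `r - 1` keeps both endpoints and turns the factor
`01` of the word at positions `r - 1, r` into `10`, leaving all other letters alone. Read from
`min S` the word therefore increases, and read from `max S` it decreases, so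
`λ'_B < λ_B < λ_A < λ'_A`.
-/

def lo (S : Finset ℤ) : ℤ := WithTop.untopD 0 S.min
def hi (S : Finset ℤ) : ℤ := WithBot.unbotD 0 S.max

def wordOf (S : Finset ℤ) : List Bool :=
  (List.range ((hi S - lo S).toNat + 1)).map fun i => decide ((lo S + (i : ℤ)) ∈ S)

section Segment

variable {S : Finset ℤ} {x r : ℤ}

theorem lo_eq_min' (hS : S.Nonempty) : lo S = S.min' hS := by
  simp [lo, ← Finset.coe_min' hS]

theorem hi_eq_max' (hS : S.Nonempty) : hi S = S.max' hS := by
  simp [hi, ← Finset.coe_max' hS]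

theorem lo_mem (hS : S.Nonempty) : lo S ∈ S := lo_eq_min' hS ▸ S.min'_mem hS

theorem hi_mem (hS : S.Nonempty) : hi S ∈ S := hi_eq_max' hS ▸ S.max'_mem hS

theorem lo_le (hx : x ∈ S) : lo S ≤ x := lo_eq_min' ⟨x, hx⟩ ▸ S.min'_le x hx

theorem le_hi (hx : x ∈ S) : x ≤ hi S := hi_eq_max' ⟨x, hx⟩ ▸ S.le_max' x hx

theorem lo_eq_of_mem_of_forall_le (hx : x ∈ S) (h : ∀ y ∈ S, x ≤ y) : lo S = x :=
  le_antisymm (lo_le hx) (h _ (lo_mem ⟨x, hx⟩))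

theorem hi_eq_of_mem_of_forall_le (hx : x ∈ S) (h : ∀ y ∈ S, y ≤ x) : hi S = x :=
  le_antisymm (h _ (hi_mem ⟨x, hx⟩)) (le_hi hx)

theorem lo_insert_sub_one_erase (hr : r ∈ S) (hmin : lo S < r) :
    lo (insert (r - 1) (S.erase r)) = lo S := by
  refine lo_eq_of_mem_of_forall_le
    (Finset.mem_insert_of_mem (Finset.mem_erase.2 ⟨hmin.ne, lo_mem ⟨r, hr⟩⟩)) fun y hy => ?_
  rcases Finset.mem_insert.1 hy with rfl | hy
  · omega
  · exact lo_le (Finset.mem_of_mem_erase hy)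

theorem hi_insert_sub_one_erase (hr : r ∈ S) (hmax : r < hi S) :
    hi (insert (r - 1) (S.erase r)) = hi S := by
  refine hi_eq_of_mem_of_forall_le
    (Finset.mem_insert_of_mem (Finset.mem_erase.2 ⟨hmax.ne', hi_mem ⟨r, hr⟩⟩)) fun y hy => ?_
  rcases Finset.mem_insert.1 hy with rfl | hy
  · have := le_hi hr; omega
  · exact le_hi (Finset.mem_of_mem_erase hy)

end Segment

theorem wordOf_eq_map_range (S : Finset ℤ) :
    wordOf S = (List.range ((hi S - lo S).toNat + 1)).map fun k : ℕ => decide (lo S + k ∈ S) := by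
  simp [wordOf, ← List.map_eq_flatMap, Function.comp_def]

theorem wordOf_eq_append {S : Finset ℤ} {t : ℤ} (ht : lo S ≤ t) (ht' : t < hi S) :
    wordOf S = (List.range (t - lo S).toNat).map (fun k : ℕ => decide (lo S + k ∈ S)) ++
      decide (t ∈ S) :: decide (t + 1 ∈ S) ::
      (List.range (hi S - t - 1).toNat).map (fun k : ℕ => decide (t + 2 + k ∈ S)) := by
  have hlen : (hi S - lo S).toNat + 1 = (t - lo S).toNat + 2 + (hi S - t - 1).toNat := by omega
  rw [wordOf_eq_map_range, hlen, List.range_add, List.range_add]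
  have hcast : ((t - lo S).toNat : ℤ) = t - lo S := by omega
  simp [Function.comp_def, List.range_succ, hcast, ← add_assoc]

theorem wordOf_eq_append_of_agree {S T : Finset ℤ} {t : ℤ} (hlo : lo T = lo S) (hhi : hi T = hi S)
    (ht : lo S ≤ t) (ht' : t < hi S) (hST : ∀ x, x ≠ t → x ≠ t + 1 → (x ∈ T ↔ x ∈ S)) :
    ∃ A B : List Bool, wordOf S = A ++ decide (t ∈ S) :: decide (t + 1 ∈ S) :: B ∧
      wordOf T = A ++ decide (t ∈ T) :: decide (t + 1 ∈ T) :: B := by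
  refine ⟨_, _, wordOf_eq_append ht ht', ?_⟩
  rw [wordOf_eq_append (hlo ▸ ht) (hhi ▸ ht'), hlo, hhi]
  congr 1
  · refine List.map_congr_left fun k hk => decide_eq_decide.2 (hST _ ?_ ?_) <;>
      rw [List.mem_range] at hk <;> omega
  · congr 2
    refine List.map_congr_left fun k _ => decide_eq_decide.2 (hST _ ?_ ?_) <;> omega

theorem inner_left_move_preserves_general (S : Finset ℤ)
    (hlex : List.Lex (· < ·) (wordOf S).reverse (wordOf S))
    (r : ℤ) (hr : r ∈ S) (hmin : lo S < r) (hmax : r < hi S) (hvac : r - 1 ∉ S) :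
    lo (insert (r - 1) (S.erase r)) = lo S ∧
    hi (insert (r - 1) (S.erase r)) = hi S ∧
    List.Lex (· < ·) (wordOf (insert (r - 1) (S.erase r))).reverse
      (wordOf (insert (r - 1) (S.erase r))) := by
  set T := insert (r - 1) (S.erase r) with hTdef
  have hlo : lo T = lo S := lo_insert_sub_one_erase hr hmin
  have hhi : hi T = hi S := hi_insert_sub_one_erase hr hmax
  refine ⟨hlo, hhi, ?_⟩
  have hagree : ∀ x, x ≠ r - 1 → x ≠ r - 1 + 1 → (x ∈ T ↔ x ∈ S) := by
    intro x h₁ h₂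
    simp [hTdef, h₁, show x ≠ r by omega]
  obtain ⟨A, B, hS, hT⟩ :=
    wordOf_eq_append_of_agree hlo hhi (by omega) (by omega) hagree
  have hrT : r ∉ T := by simp [hTdef, show r ≠ r - 1 by omega]
  have hr1T : r - 1 ∈ T := Finset.mem_insert_self _ _
  simp only [sub_add_cancel, hr, hvac, hrT, hr1T, decide_true, decide_false] at hS hT
  have hfwd : List.Lex (· < ·) (wordOf S) (wordOf T) := by
    rw [hS, hT]; exact List.Lex.append_left _ (.rel Bool.false_lt_true) A
  have hbwd : List.Lex (· < ·) (wordOf T).reverse (wordOf S).reverse := by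
    rw [hS, hT]; simpa using List.Lex.append_left _ (.rel Bool.false_lt_true) B.reverse
  exact List.lex_trans lt_trans hbwd (List.lex_trans lt_trans hlex hfwd)

/-- A leftward move of an interior robot preserves the smallest enclosing segment,
keeps the configuration asymmetric and keeps the tail the tail:
the string read from the tail end stays strictly lexicographically smaller. -/
theorem inner_left_move_preserves (S : Finset ℤ) (hcard : 3 ≤ S.card)
    (hlex : List.Lex (· < ·) (wordOf S).reverse (wordOf S))
    (r : ℤ) (hr : r ∈ S) (hmin : lo S < r) (hmax : r < hi S) (hvac : r - 1 ∉ S) :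
    lo (insert (r - 1) (S.erase r)) = lo S ∧
    hi (insert (r - 1) (S.erase r)) = hi S ∧
    List.Lex (· < ·) (wordOf (insert (r - 1) (S.erase r))).reverse
      (wordOf (insert (r - 1) (S.erase r))) :=
  inner_left_move_preserves_general S hlex r hr hmin hmax hvac
end

section
/- Let S ⊆ ℤ be a finite set with |S| ≥ 3, with λ_B < λ_A lexicographically (strings from the endpoints of the smallest enclosing segment, tail at B = max S). If the tail moves one step right, replacing S by S' = (S \ {max S}) ∪ {max S + 1}, then the new strings satisfy λ'_{B'} < λ'_A; i.e., the configuration stays asymmetric and the tail robot remains the tail. -/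
/-!
The hypothesis forces `min S < max S`, so `λ_A = 1 p 1` where `p` records the open segment.
The move turns `λ_A` into `1 p 0 1` and `λ_B` into `1 0 pᴿ 1`. After the common leading `1`,
it suffices that `r < p 1` implies `0 r < p 0 1` (for `r = pᴿ 1`), by induction on `p`:
a leading `1` of `p` beats the `0` at once, while a leading `0` of `p` forces `r` to start
with `0` too, and both sides shift by one.
-/

theorem false_cons_lt_append_false_true {p r : List Bool} (h : r < p ++ [true]) :
    false :: r < p ++ [false, true] := by
  induction p generalizing r with
  | nil => exact List.Lex.cons h
  | cons a p ih =>
    cases a with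
    | true => exact List.Lex.rel Bool.false_lt_true
    | false =>
      cases r with
      | nil => exact List.Lex.cons ((List.lex_nil_or_eq_nil _).resolve_right (by simp))
      | cons x r =>
        obtain ⟨rfl, hr⟩ : x = false ∧ r < p ++ [true] := by
          simpa [List.cons_lt_cons_iff, Bool.lt_iff] using h
        exact List.Lex.cons (ih hr)

theorem reverse_lt_self_of_insert_false_before_last {p : List Bool}
    (h : (true :: p ++ [true]).reverse < true :: p ++ [true]) :
    (true :: p ++ [false, true]).reverse < true :: p ++ [false, true] := by
  simp only [List.reverse_cons, List.reverse_append, List.reverse_nil, List.nil_append,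
    List.cons_append, List.cons_lt_cons_self] at h ⊢
  exact false_cons_lt_append_false_true h

def occupancy (S : Finset ℤ) (a : ℤ) (m : ℕ) : List Bool :=
  (List.range m).map fun i : ℕ => decide (a + i ∈ S)

section Occupancy

variable {S T : Finset ℤ} {a : ℤ} {m : ℕ}

theorem occupancy_succ : occupancy S a (m + 1) = occupancy S a m ++ [decide (a + m ∈ S)] := by
  simp [occupancy, List.range_succ]

theorem occupancy_succ_eq_cons :
    occupancy S a (m + 1) = decide (a ∈ S) :: occupancy S (a + 1) m := by
  simp [occupancy, List.range_succ_eq_map, add_assoc, add_comm (1 : ℤ)]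

theorem occupancy_congr (h : ∀ i < m, a + i ∈ S ↔ a + i ∈ T) :
    occupancy S a m = occupancy T a m :=
  List.map_congr_left fun i hi => decide_eq_decide.mpr (h i (List.mem_range.mp hi))

end Occupancy

theorem wordOf_eq_occupancy (S : Finset ℤ) :
    wordOf S = occupancy S (lo S) ((hi S - lo S).toNat + 1) := by
  simp [wordOf, occupancy, ← List.map_eq_flatMap]

section Endpoints

variable {S : Finset ℤ}

theorem isLeast_lo (hS : S.Nonempty) : IsLeast (S : Set ℤ) (lo S) := by
  have h : lo S = S.min' hS := by simp only [lo, ← Finset.coe_min' hS]; rfl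
  exact h ▸ S.isLeast_min' hS

theorem isGreatest_hi (hS : S.Nonempty) : IsGreatest (S : Set ℤ) (hi S) := by
  have h : hi S = S.max' hS := by simp only [hi, ← Finset.coe_max' hS]; rfl
  exact h ▸ S.isGreatest_max' hS

theorem lo_eq_of_isLeast {a : ℤ} (h : IsLeast (S : Set ℤ) a) : lo S = a :=
  (isLeast_lo ⟨a, h.1⟩).unique h

theorem hi_eq_of_isGreatest {a : ℤ} (h : IsGreatest (S : Set ℤ) a) : hi S = a :=
  (isGreatest_hi ⟨a, h.1⟩).unique h

theorem nonempty_of_lo_lt_hi (h : lo S < hi S) : S.Nonempty := by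
  rw [Finset.nonempty_iff_ne_empty]
  rintro rfl
  simp [lo, hi] at h

theorem lo_lt_hi_of_reverse_wordOf_lt (h : (wordOf S).reverse < wordOf S) : lo S < hi S := by
  by_contra hle
  rw [wordOf_eq_occupancy, Int.toNat_eq_zero.mpr (by omega)] at h
  simp [occupancy] at h

theorem occupancy_lo (h : lo S < hi S) :
    occupancy S (lo S) (hi S - lo S).toNat
      = true :: occupancy S (lo S + 1) ((hi S - lo S).toNat - 1) := by
  obtain ⟨n, hn⟩ : ∃ n, (hi S - lo S).toNat = n + 1 :=
    ⟨_, (Nat.succ_pred_eq_of_pos (by omega)).symm⟩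
  rw [hn, occupancy_succ_eq_cons, Nat.add_sub_cancel,
    decide_eq_true (Finset.mem_coe.mp (isLeast_lo (nonempty_of_lo_lt_hi h)).1)]

theorem wordOf_eq_of_lo_lt_hi (h : lo S < hi S) :
    wordOf S = true :: occupancy S (lo S + 1) ((hi S - lo S).toNat - 1) ++ [true] := by
  rw [wordOf_eq_occupancy, occupancy_succ, occupancy_lo h, Int.toNat_of_nonneg (by omega),
    add_sub_cancel, decide_eq_true (Finset.mem_coe.mp (isGreatest_hi (nonempty_of_lo_lt_hi h)).1),
    List.cons_append]

end Endpoints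

def tailMove (S : Finset ℤ) : Finset ℤ := insert (hi S + 1) (S.erase (hi S))

section TailMove

variable {S : Finset ℤ}

theorem mem_tailMove {x : ℤ} : x ∈ tailMove S ↔ x = hi S + 1 ∨ x ≠ hi S ∧ x ∈ S := by
  simp [tailMove]

theorem lo_tailMove (h : lo S < hi S) : lo (tailMove S) = lo S := by
  have hS := isLeast_lo (nonempty_of_lo_lt_hi h)
  refine lo_eq_of_isLeast ⟨mem_tailMove.mpr (.inr ⟨h.ne, hS.1⟩), fun x hx => ?_⟩
  rcases mem_tailMove.mp hx with rfl | ⟨-, hx⟩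
  · omega
  · exact hS.2 hx

theorem hi_tailMove (hS : S.Nonempty) : hi (tailMove S) = hi S + 1 := by
  refine hi_eq_of_isGreatest ⟨mem_tailMove.mpr (.inl rfl), fun x hx => ?_⟩
  rcases mem_tailMove.mp hx with rfl | ⟨-, hx⟩
  · rfl
  · exact ((isGreatest_hi hS).2 hx).trans (Int.le_add_one le_rfl)

theorem wordOf_tailMove (h : lo S < hi S) :
    wordOf (tailMove S)
      = true :: occupancy S (lo S + 1) ((hi S - lo S).toNat - 1) ++ [false, true] := by
  have hn : ((hi S - lo S).toNat : ℤ) = hi S - lo S := Int.toNat_of_nonneg (by omega)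
  have hgap : lo S + ((hi S - lo S).toNat : ℤ) ∉ tailMove S := by
    simp [mem_tailMove, hn]
  have htail : lo S + (((hi S - lo S).toNat + 1 : ℕ) : ℤ) ∈ tailMove S := by
    simp only [mem_tailMove, Nat.cast_add, Nat.cast_one, hn]
    omega
  have hlen : (hi S + 1 - lo S).toNat = (hi S - lo S).toNat + 1 := by omega
  rw [wordOf_eq_occupancy, lo_tailMove h, hi_tailMove (nonempty_of_lo_lt_hi h), hlen,
    occupancy_succ, occupancy_succ, decide_eq_false hgap, decide_eq_true htail,
    occupancy_congr (T := S), occupancy_lo h]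
  · simp
  · intro i hi_lt
    have h1 : lo S + i ≠ hi S + 1 := by omega
    have h2 : lo S + i ≠ hi S := by omega
    simp [mem_tailMove, h1, h2]

end TailMove

theorem tail_right_move_preserves_general (S : Finset ℤ)
    (hlex : List.Lex (· < ·) (wordOf S).reverse (wordOf S)) :
    List.Lex (· < ·) (wordOf (insert (hi S + 1) (S.erase (hi S)))).reverse
      (wordOf (insert (hi S + 1) (S.erase (hi S)))) := by
  have h := lo_lt_hi_of_reverse_wordOf_lt hlex
  rw [wordOf_eq_of_lo_lt_hi h] at hlex
  change (wordOf (tailMove S)).reverse < wordOf (tailMove S)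
  rw [wordOf_tailMove h]
  exact reverse_lt_self_of_insert_false_before_last hlex

/-- After the tail robot moves one step to the right (outside the current smallest
enclosing segment), the configuration stays asymmetric and the tail remains the tail:
the string read from the new tail end is still strictly smaller lexicographically. -/
theorem tail_right_move_preserves (S : Finset ℤ) (hcard : 3 ≤ S.card)
    (hlex : List.Lex (· < ·) (wordOf S).reverse (wordOf S)) :
    List.Lex (· < ·) (wordOf (insert (hi S + 1) (S.erase (hi S)))).reverse
      (wordOf (insert (hi S + 1) (S.erase (hi S)))) :=
  tail_right_move_preserves_general S hlex
end

section
/- Let w be a binary word of length n with w(1) = 1 = w(n) and at least three 1's, and assume reverse(w) ≤ w lexicographically. Then for the word w' of length n+1 obtained by inserting a 0 at position n (i.e., w' = w(1)…w(n−1) 0 w(n)), one has reverse(w') < w' strictly. -/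
/-!
Write `w = 1 v 1`. Stripping the outer letters, the hypothesis becomes `reverse v ≤ v` and the
claim becomes `0 (reverse v) 1 < v 0 1`, which reduces to `0 (reverse v) < v 0` as both sides have
equal length. Now `0 (reverse v) ≤ 0 v`, and `0 v < v 0` because `v` contains a `1`: at the first
position where `v` is nonzero, `0 v` still reads the `0` preceding it.
-/

namespace List

variable {α : Type*}

theorem lex_append_append_iff_of_length_eq {r : α → α → Prop} {a b : List α} (s t : List α)
    (h : a.length = b.length) :
    Lex r (a ++ s) (b ++ t) ↔ Lex r a b ∨ a = b ∧ Lex r s t := by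
  induction a generalizing b with
  | nil => cases b with
    | nil => simp
    | cons => simp at h
  | cons x a ih => cases b with
    | nil => simp at h
    | cons y b =>
      simp only [cons_append, cons_lex_cons_iff, ih (Nat.succ.inj h), cons.injEq]
      tauto

theorem append_lt_append_right_of_length_eq [LT α] {a b : List α} (s : List α)
    (h : a.length = b.length) (hab : a < b) : a ++ s < b ++ s :=
  (lex_append_append_iff_of_length_eq s s h).2 (.inl hab)

theorem le_of_append_le_append_right_of_length_eq [LinearOrder α] {a b : List α} (s : List α)
    (h : a.length = b.length) (hab : a ++ s ≤ b ++ s) : a ≤ b := by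
  rw [le_iff_eq_or_lt] at hab ⊢
  rcases hab with hab | hab
  · exact .inl (append_cancel_right hab)
  · rcases (lex_append_append_iff_of_length_eq s s h).1 hab with hab | ⟨hab, -⟩
    · exact .inr hab
    · exact .inl hab

theorem bot_cons_lt_append_bot [PartialOrder α] [OrderBot α] :
    ∀ {v : List α}, (∃ x ∈ v, x ≠ ⊥) → ⊥ :: v < v ++ [⊥]
  | [], ⟨_, hx, _⟩ => absurd hx not_mem_nil
  | x :: v, ⟨y, hy, hy_ne⟩ => by
    obtain rfl | hx := eq_or_ne x ⊥
    · exact Lex.cons (bot_cons_lt_append_bot ⟨y, (mem_cons.1 hy).resolve_left hy_ne, hy_ne⟩)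
    · exact Lex.rel hx.bot_lt

theorem exists_eq_cons_append_singleton {w : List α} {a b : α} (hhead : w.head? = some a)
    (hlast : w.getLast? = some b) (hlen : 2 ≤ w.length) : ∃ v, w = a :: (v ++ [b]) := by
  obtain ⟨u, rfl⟩ := getLast?_eq_some_iff.1 hlast
  cases u with
  | nil => simp at hlen
  | cons c v => exact ⟨v, by simp_all⟩

end List

/-- String-theoretic core of Proposition 2: for a binary word with both endpoints 1,
at least three 1's, and reversal ≤ the word, inserting a 0 before the last letter
makes the reversal strictly smaller than the new word. -/
theorem insert_zero_breaks_tie (w : List Bool)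
    (hhead : w.head? = some true) (hlast : w.getLast? = some true)
    (hcount : 3 ≤ w.count true)
    (hle : w.reverse = w ∨ List.Lex (· < ·) w.reverse w) :
    List.Lex (· < ·) (w.dropLast ++ [false, true]).reverse (w.dropLast ++ [false, true]) := by
  obtain ⟨v, rfl⟩ := List.exists_eq_cons_append_singleton hhead hlast
    (le_trans (by norm_num) (hcount.trans (List.count_le_length ..)))
  have hv : true ∈ v := by simpa [List.count_append] using hcount
  have hrev : v.reverse ≤ v := by
    have h : v.reverse ++ [true] ≤ v ++ [true] := by
      rw [le_iff_eq_or_lt]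
      simpa using hle
    exact List.le_of_append_le_append_right_of_length_eq [true] (by simp) h
  have key : false :: v.reverse < v ++ [false] :=
    (List.cons_le_cons false hrev).trans_lt (List.bot_cons_lt_append_bot ⟨true, hv, by decide⟩)
  have h : true :: (false :: v.reverse ++ [true]) < true :: (v ++ [false] ++ [true]) :=
    .cons (List.append_lt_append_right_of_length_eq [true] (by simp) key)
  rw [← List.cons_append, List.dropLast_concat]
  simpa using h
end

section
/- Let w be a binary word of length n ≥ 3 that is a palindrome (w = reverse(w)), with w(1) = w(n) = 1 and at least three 1's. Then the word w' = w(1)…w(n−1) 0 w(n) of length n+1 obtained by inserting a 0 before the last letter is not a palindrome. -/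
/-! If `w` and `w.dropLast ++ [0, 1]` are both palindromes, then `w = 1 v 1` with `v` a palindrome,
and comparing the two reversals gives `0 v = v 0`. A word fixed by this rotation is constant,
so `w = 1 0ᵏ 1` contains only two `1`'s. -/

namespace List

variable {α : Type*}

theorem eq_replicate_of_append_singleton_eq_cons {a : α} :
    ∀ {l : List α}, l ++ [a] = a :: l → l = replicate l.length a
  | [], _ => rfl
  | x :: t, h => by
    obtain ⟨rfl, ht⟩ := cons_eq_cons.mp h
    simpa [replicate_succ] using eq_replicate_of_append_singleton_eq_cons ht

theorem exists_eq_cons_replicate_append_of_reverse_eq_dropLast_append {a b : α} (hab : a ≠ b)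
    {w : List α} (hw : w.reverse = w)
    (h : (w.dropLast ++ [a, b]).reverse = w.dropLast ++ [a, b]) :
    ∃ k, w = b :: (replicate k a ++ [b]) := by
  rcases w.eq_nil_or_concat with rfl | ⟨u, c, rfl⟩
  · simp [hab.symm] at h
  rw [concat_eq_append] at h hw ⊢
  rw [dropLast_concat] at h
  rcases u with _ | ⟨d, v⟩
  · simp [hab.symm] at h
  simp only [reverse_cons, reverse_append, reverse_nil, nil_append, cons_append,
    cons.injEq] at h hw
  obtain ⟨rfl, hv⟩ := hw
  obtain ⟨rfl, h⟩ := h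
  have hv : v.reverse = v := by simpa using hv
  have hrot : v ++ [a] = a :: v := (append_left_inj [b]).mp (by simpa [hv] using h.symm)
  exact ⟨v.length, by rw [eq_replicate_of_append_singleton_eq_cons hrot]; simp⟩

end List

theorem palindrome_broken_by_tail_move_general (w : List Bool)
    (hpal : w.reverse = w)
    (hcount : 3 ≤ w.count true) :
    (w.dropLast ++ [false, true]).reverse ≠ w.dropLast ++ [false, true] := by
  intro h
  obtain ⟨k, rfl⟩ :=
    List.exists_eq_cons_replicate_append_of_reverse_eq_dropLast_append Bool.false_ne_true hpal h
  simp at hcount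

/-- If a binary palindrome of length ≥ 3 has 1's at both ends and at least three 1's,
then inserting a 0 before its last letter yields a non-palindrome. -/
theorem palindrome_broken_by_tail_move (w : List Bool)
    (hpal : w.reverse = w) (hlen : 3 ≤ w.length)
    (hhead : w.head? = some true) (hlast : w.getLast? = some true)
    (hcount : 3 ≤ w.count true) :
    (w.dropLast ++ [false, true]).reverse ≠ w.dropLast ++ [false, true] :=
  palindrome_broken_by_tail_move_general w hpal hcount
end

section
/- Let S ⊆ ℤ² be a finite set contained in an axis-aligned rectangle R of dimensions m × n with m, n ≥ 2 (the smallest enclosing rectangle), and for each of the four corners define the boustrophedon occupancy string scanning column-by-column as in the APF algorithm. If two of these four corner strings (for m > n) are equal, then S admits a nontrivial symmetry: a reflection in a horizontal or vertical axis, or a rotation by 180°, mapping S onto itself. -/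
def xlo (S : Finset (ℤ × ℤ)) : ℤ := WithTop.untopD 0 (S.image Prod.fst).min
def xhi (S : Finset (ℤ × ℤ)) : ℤ := WithBot.unbotD 0 (S.image Prod.fst).max
def ylo (S : Finset (ℤ × ℤ)) : ℤ := WithTop.untopD 0 (S.image Prod.snd).min
def yhi (S : Finset (ℤ × ℤ)) : ℤ := WithBot.unbotD 0 (S.image Prod.snd).max

/-- Number of grid lines of the SER in the long (here: vertical) direction. -/
def mDim (S : Finset (ℤ × ℤ)) : ℕ := (yhi S - ylo S).toNat + 1
/-- Number of grid lines of the SER in the short (here: horizontal) direction. -/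
def nDim (S : Finset (ℤ × ℤ)) : ℕ := (xhi S - xlo S).toNat + 1

/-- Boustrophedon occupancy string: starting at corner `c`, scan `m` successive lines
in direction `dL`, each line of `n` nodes in direction `dS`, alternating the direction
of scanning of the lines (snake order); record `true` for occupied nodes. -/
def snake (S : Finset (ℤ × ℤ)) (c dL dS : ℤ × ℤ) (m n : ℕ) : List Bool :=
  ((List.range m).map fun i =>
    (List.range n).map fun j =>
      let j' : ℕ := if i % 2 = 0 then j else n - 1 - j
      decide ((c.1 + (i : ℤ) * dL.1 + (j' : ℤ) * dS.1,
               c.2 + (i : ℤ) * dL.2 + (j' : ℤ) * dS.2) ∈ S)).flatten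

def lamAB (S : Finset (ℤ × ℤ)) : List Bool := snake S (xlo S, ylo S) (0, 1) (1, 0) (mDim S) (nDim S)
def lamBA (S : Finset (ℤ × ℤ)) : List Bool := snake S (xhi S, ylo S) (0, 1) (-1, 0) (mDim S) (nDim S)
def lamDC (S : Finset (ℤ × ℤ)) : List Bool := snake S (xlo S, yhi S) (0, -1) (1, 0) (mDim S) (nDim S)
def lamCD (S : Finset (ℤ × ℤ)) : List Bool := snake S (xhi S, yhi S) (0, -1) (-1, 0) (mDim S) (nDim S)

def reflH (S : Finset (ℤ × ℤ)) : Prop := ∃ c : ℤ, ∀ p : ℤ × ℤ, p ∈ S ↔ (p.1, c - p.2) ∈ S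
def reflV (S : Finset (ℤ × ℤ)) : Prop := ∃ c : ℤ, ∀ p : ℤ × ℤ, p ∈ S ↔ (c - p.1, p.2) ∈ S
def rot180 (S : Finset (ℤ × ℤ)) : Prop := ∃ a b : ℤ, ∀ p : ℤ × ℤ, p ∈ S ↔ (a - p.1, b - p.2) ∈ S

/-!
Each corner string of `S` is the string `lamAB` of the image of `S` under the symmetry of its
smallest enclosing rectangle that carries the corner `A` to that corner: the identity, one of the
two axis reflections, or the half-turn. Reading a configuration inside a fixed rectangle is
injective, so two equal corner strings give `f S = g S` for two distinct such symmetries `f`, `g`,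
and `S` is invariant under the nontrivial symmetry `g ∘ f`.
-/

open Function Set

theorem List.eq_of_flatten_eq_of_forall_length_eq {α : Type*} {n : ℕ} :
    ∀ {l₁ l₂ : List (List α)}, (∀ x ∈ l₁, x.length = n) → (∀ x ∈ l₂, x.length = n) →
      l₁.length = l₂.length → l₁.flatten = l₂.flatten → l₁ = l₂
  | [], [], _, _, _, _ => rfl
  | a :: t₁, b :: t₂, h₁, h₂, hl, h => by
    simp only [List.flatten_cons] at h
    obtain ⟨rfl, ht⟩ := List.append_inj h (by rw [h₁ a (by simp), h₂ b (by simp)])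
    rw [eq_of_flatten_eq_of_forall_length_eq (fun x hx => h₁ x (by simp [hx]))
      (fun x hx => h₂ x (by simp [hx])) (by simpa using hl) ht]

theorem Function.Involutive.mem_finset_image_iff {α : Type*} [DecidableEq α] {f : α → α}
    (hf : Involutive f) {s : Finset α} {a : α} : a ∈ s.image f ↔ f a ∈ s := by
  simp [Finset.mem_image, hf.eq_iff]

section Snake

variable {S T : Finset (ℤ × ℤ)} {c dL dS c' dL' dS' : ℤ × ℤ} {m n : ℕ}

theorem snake_congr (h : ∀ i k : ℤ, c + i • dL + k • dS ∈ S ↔ c' + i • dL' + k • dS' ∈ T) :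
    snake S c dL dS m n = snake T c' dL' dS' m n := by
  unfold snake
  congr 1
  exact List.map_congr_left fun i _ => List.map_congr_left fun j _ => decide_eq_decide.mpr (h _ _)

/-- Both strings scan line `i` in the same order, so equal strings agree at every node. -/
theorem mem_iff_of_snake_eq (h : snake S c dL dS m n = snake T c' dL' dS' m n)
    {i k : ℕ} (hi : i < m) (hk : k < n) :
    c + (i : ℤ) • dL + (k : ℤ) • dS ∈ S ↔ c' + (i : ℤ) • dL' + (k : ℤ) • dS' ∈ T := by
  have rows := List.eq_of_flatten_eq_of_forall_length_eq (n := n) (by simp) (by simp)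
    (by simp) h
  -- `snake` indexes its lines by `i : ℤ`, coercing `List.range m` to a list of integers
  have row := List.map_eq_map_iff.mp rows (i : ℤ) (by simp [hi])
  set j : ℕ := if (i : ℤ) % 2 = 0 then k else n - 1 - k
  have hj : (if (i : ℤ) % 2 = 0 then j else n - 1 - j) = k := by
    simp only [j]; split_ifs <;> omega
  have node := List.map_eq_map_iff.mp row j
    (by simp only [List.mem_range, j]; split_ifs <;> omega)
  simp only [hj, decide_eq_decide] at node
  exact node

end Snake

/-- The smallest enclosing rectangle of `S` (junk `{(0, 0)}` when `S = ∅`). -/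
def ser (S : Finset (ℤ × ℤ)) : Set (ℤ × ℤ) := Icc (xlo S) (xhi S) ×ˢ Icc (ylo S) (yhi S)

def serFlipX (S : Finset (ℤ × ℤ)) (p : ℤ × ℤ) : ℤ × ℤ := (xlo S + xhi S - p.1, p.2)
def serFlipY (S : Finset (ℤ × ℤ)) (p : ℤ × ℤ) : ℤ × ℤ := (p.1, ylo S + yhi S - p.2)
def serHalfTurn (S : Finset (ℤ × ℤ)) (p : ℤ × ℤ) : ℤ × ℤ :=
  (xlo S + xhi S - p.1, ylo S + yhi S - p.2)

/-- The string `lamAB` of `T` read in the rectangle of `S`. -/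
def serScan (S T : Finset (ℤ × ℤ)) : List Bool :=
  snake T (xlo S, ylo S) (0, 1) (1, 0) (mDim S) (nDim S)

def IsSerInvolution (S : Finset (ℤ × ℤ)) (f : ℤ × ℤ → ℤ × ℤ) : Prop :=
  Involutive f ∧ MapsTo f (ser S) (ser S)

variable {S : Finset (ℤ × ℤ)}

theorem mem_ser_of_mem {p : ℤ × ℤ} (hp : p ∈ S) : p ∈ ser S :=
  ⟨⟨WithTop.untopD_le (Finset.min_le (Finset.mem_image_of_mem _ hp)),
      WithBot.le_unbotD (Finset.le_max (Finset.mem_image_of_mem _ hp))⟩,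
    ⟨WithTop.untopD_le (Finset.min_le (Finset.mem_image_of_mem _ hp)),
      WithBot.le_unbotD (Finset.le_max (Finset.mem_image_of_mem _ hp))⟩⟩

theorem eq_of_serScan_eq {T T' : Finset (ℤ × ℤ)} (hT : ↑T ⊆ ser S) (hT' : ↑T' ⊆ ser S)
    (h : serScan S T = serScan S T') : T = T' := by
  ext p
  by_cases hp : p ∈ ser S
  · obtain ⟨⟨h₁, h₂⟩, h₃, h₄⟩ := hp
    have := mem_iff_of_snake_eq h (i := (p.2 - ylo S).toNat) (k := (p.1 - xlo S).toNat)
      (by unfold mDim; omega) (by unfold nDim; omega)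
    convert this using 2 <;> ext <;>
      simp only [Prod.fst_add, Prod.snd_add, Prod.smul_fst, Prod.smul_snd, smul_eq_mul] <;> omega
  · exact iff_of_false (fun h => hp (hT h)) (fun h => hp (hT' h))

namespace IsSerInvolution

protected theorem id : IsSerInvolution S id := ⟨fun _ => rfl, mapsTo_id _⟩

protected theorem flipX : IsSerInvolution S (serFlipX S) :=
  ⟨fun p => by simp [serFlipX],
    fun p hp => by simp only [ser, serFlipX, mem_prod, mem_Icc] at hp ⊢; omega⟩

protected theorem flipY : IsSerInvolution S (serFlipY S) :=
  ⟨fun p => by simp [serFlipY],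
    fun p hp => by simp only [ser, serFlipY, mem_prod, mem_Icc] at hp ⊢; omega⟩

protected theorem halfTurn : IsSerInvolution S (serHalfTurn S) :=
  ⟨fun p => by simp [serHalfTurn],
    fun p hp => by simp only [ser, serHalfTurn, mem_prod, mem_Icc] at hp ⊢; omega⟩

theorem image_subset_ser {f : ℤ × ℤ → ℤ × ℤ} (hf : IsSerInvolution S f) :
    ↑(S.image f) ⊆ ser S := by
  rw [Finset.coe_image]
  exact hf.2.image_subset.trans' (image_mono fun _ => mem_ser_of_mem)

end IsSerInvolution

theorem mem_iff_of_serScan_eq {f g : ℤ × ℤ → ℤ × ℤ} (hf : IsSerInvolution S f)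
    (hg : IsSerInvolution S g) (h : serScan S (S.image f) = serScan S (S.image g))
    (p : ℤ × ℤ) : p ∈ S ↔ g (f p) ∈ S := by
  have himage := eq_of_serScan_eq hf.image_subset_ser hg.image_subset_ser h
  rw [← hg.1.mem_finset_image_iff, ← himage, hf.1.mem_finset_image_iff, hf.1]

theorem lamAB_eq_serScan : lamAB S = serScan S (S.image id) := by
  rw [Finset.image_id]; rfl

theorem lamBA_eq_serScan : lamBA S = serScan S (S.image (serFlipX S)) :=
  snake_congr fun i k => by
    rw [IsSerInvolution.flipX.1.mem_finset_image_iff]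
    convert Iff.rfl using 2
    ext <;>
      simp only [serFlipX, Prod.fst_add, Prod.snd_add, Prod.smul_fst, Prod.smul_snd, smul_eq_mul]
    ring

theorem lamDC_eq_serScan : lamDC S = serScan S (S.image (serFlipY S)) :=
  snake_congr fun i k => by
    rw [IsSerInvolution.flipY.1.mem_finset_image_iff]
    convert Iff.rfl using 2
    ext <;>
      simp only [serFlipY, Prod.fst_add, Prod.snd_add, Prod.smul_fst, Prod.smul_snd, smul_eq_mul]
    ring

theorem lamCD_eq_serScan : lamCD S = serScan S (S.image (serHalfTurn S)) :=
  snake_congr fun i k => by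
    rw [IsSerInvolution.halfTurn.1.mem_finset_image_iff]
    convert Iff.rfl using 2
    ext <;>
      simp only [serHalfTurn, Prod.fst_add, Prod.snd_add, Prod.smul_fst, Prod.smul_snd, smul_eq_mul] <;>
      ring

theorem equal_corner_strings_give_symmetry_general (S : Finset (ℤ × ℤ))
    (heq : lamAB S = lamBA S ∨ lamAB S = lamCD S ∨ lamAB S = lamDC S ∨
           lamBA S = lamCD S ∨ lamBA S = lamDC S ∨ lamCD S = lamDC S) :
    reflH S ∨ reflV S ∨ rot180 S := by
  rw [lamAB_eq_serScan, lamBA_eq_serScan, lamCD_eq_serScan, lamDC_eq_serScan] at heq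
  rcases heq with h | h | h | h | h | h
  · exact Or.inr (Or.inl ⟨_, mem_iff_of_serScan_eq .id .flipX h⟩)
  · exact Or.inr (Or.inr ⟨_, _, mem_iff_of_serScan_eq .id .halfTurn h⟩)
  · exact Or.inl ⟨_, mem_iff_of_serScan_eq .id .flipY h⟩
  · have hsym := mem_iff_of_serScan_eq IsSerInvolution.flipX IsSerInvolution.halfTurn h
    exact Or.inl ⟨ylo S + yhi S, fun p => by simpa [serFlipX, serHalfTurn] using hsym p⟩
  · exact Or.inr (Or.inr ⟨_, _, mem_iff_of_serScan_eq .flipX .flipY h⟩)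
  · have hsym := mem_iff_of_serScan_eq IsSerInvolution.halfTurn IsSerInvolution.flipY h
    exact Or.inr (Or.inl ⟨xlo S + xhi S, fun p => by
      simpa [serFlipY, serHalfTurn] using hsym p⟩)

/-- If two of the four boustrophedon corner strings of a configuration whose SER is a
proper (non-square) rectangle coincide, then the configuration has a nontrivial
symmetry: a reflection in a horizontal or vertical axis, or a rotation by 180°. -/
theorem equal_corner_strings_give_symmetry (S : Finset (ℤ × ℤ)) (hS : S.Nonempty)
    (hn : 2 ≤ nDim S) (hmn : nDim S < mDim S)
    (heq : lamAB S = lamBA S ∨ lamAB S = lamCD S ∨ lamAB S = lamDC S ∨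
           lamBA S = lamCD S ∨ lamBA S = lamDC S ∨ lamCD S = lamDC S) :
    reflH S ∨ reflV S ∨ rot180 S :=
  equal_corner_strings_give_symmetry_general S heq
end

section
/- Let S ⊆ ℤ² be a finite set with |S| ≥ 2 whose only symmetry (among reflections in horizontal/vertical/diagonal axes and rotations by 90° or 180°) is the identity. If the smallest enclosing rectangle of S has dimensions m × n with m > n > 1, then the four boustrophedon corner strings λ_{AB}, λ_{BA}, λ_{CD}, λ_{DC} are pairwise distinct, and hence there is a unique lexicographically largest one. -/
def reflDiag (S : Finset (ℤ × ℤ)) : Prop := ∃ c : ℤ, ∀ p : ℤ × ℤ, p ∈ S ↔ (p.2 + c, p.1 - c) ∈ S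
def reflAnti (S : Finset (ℤ × ℤ)) : Prop := ∃ a : ℤ, ∀ p : ℤ × ℤ, p ∈ S ↔ (a - p.2, a - p.1) ∈ S
def rot90 (S : Finset (ℤ × ℤ)) : Prop := ∃ a b : ℤ, ∀ p : ℤ × ℤ, p ∈ S ↔ (a - p.2, b + p.1) ∈ S
/-!
Each corner string reads the same `m × n` grid of nodes of the SER, only with the origin at a
different corner, and all four use the same snake pattern. So for two different corners the node
visited at any step by one string is the image of the node visited by the other under the
reflection of the SER in its vertical or horizontal mid-axis, or under the half-turn about its
centre, and equal strings would make that map a symmetry of `S`. The four strings are therefore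
distinct, and the lexicographic order, being linear, has a unique maximum among them.
-/

theorem List.eq_of_flatten_eq_of_map_length_eq {α : Type*} :
    ∀ {L L' : List (List α)}, L.flatten = L'.flatten → L.map length = L'.map length → L = L'
  | [], [], _, _ => rfl
  | l :: L, l' :: L', h, hlen => by
    simp only [List.flatten_cons, List.map_cons, List.cons.injEq] at h hlen
    obtain ⟨rfl, hrest⟩ := List.append_inj h hlen.1
    rw [List.eq_of_flatten_eq_of_map_length_eq hrest hlen.2]

theorem mem_iff_of_snake_eq_s10 {S : Finset (ℤ × ℤ)} {c₁ c₂ dL₁ dL₂ dS₁ dS₂ : ℤ × ℤ} {m n : ℕ}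
    (h : snake S c₁ dL₁ dS₁ m n = snake S c₂ dL₂ dS₂ m n) {i k : ℕ} (hi : i < m) (hk : k < n) :
    (c₁.1 + i * dL₁.1 + k * dS₁.1, c₁.2 + i * dL₁.2 + k * dS₁.2) ∈ S ↔
      (c₂.1 + i * dL₂.1 + k * dS₂.1, c₂.2 + i * dL₂.2 + k * dS₂.2) ∈ S := by
  have hrows := List.eq_of_flatten_eq_of_map_length_eq h (by simp [Function.comp_def])
  have hrow := (List.map_inj_left.mp hrows) i (by simpa using hi)
  -- on odd rows step `j` visits column `n - 1 - j`, and this is an involution of `range n`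
  obtain ⟨j, hj, hjk⟩ : ∃ j < n, (if (i : ℤ) % 2 = 0 then j else n - 1 - j) = k := by
    by_cases hev : (i : ℤ) % 2 = 0
    · exact ⟨k, hk, if_pos hev⟩
    · exact ⟨n - 1 - k, by omega, by rw [if_neg hev]; omega⟩
  have hcol := (List.map_inj_left.mp hrow) j (List.mem_range.mpr hj)
  dsimp only at hcol
  rw [hjk] at hcol
  exact decide_eq_decide.mp hcol

theorem le_unbotD_max {s : Finset ℤ} {a : ℤ} (ha : a ∈ s) : a ≤ WithBot.unbotD 0 s.max := by
  obtain ⟨b, hb⟩ := Finset.max_of_mem ha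
  have hab : (a : WithBot ℤ) ≤ b := hb ▸ Finset.le_max ha
  simpa [hb] using hab

theorem untopD_min_le {s : Finset ℤ} {a : ℤ} (ha : a ∈ s) : WithTop.untopD 0 s.min ≤ a := by
  obtain ⟨b, hb⟩ := Finset.min_of_mem ha
  have hba : (b : WithTop ℤ) ≤ a := hb ▸ Finset.min_le ha
  simpa [hb] using hba

section Corners

variable {S : Finset (ℤ × ℤ)}

theorem mem_SER {p : ℤ × ℤ} (hp : p ∈ S) :
    xlo S ≤ p.1 ∧ p.1 ≤ xhi S ∧ ylo S ≤ p.2 ∧ p.2 ≤ yhi S :=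
  ⟨untopD_min_le (Finset.mem_image_of_mem _ hp), le_unbotD_max (Finset.mem_image_of_mem _ hp),
    untopD_min_le (Finset.mem_image_of_mem _ hp), le_unbotD_max (Finset.mem_image_of_mem _ hp)⟩

def axisCoord (fromHi : Bool) (lo hi k : ℤ) : ℤ := if fromHi then hi - k else lo + k

def reflectIf (b : Bool) (lo hi x : ℤ) : ℤ := if b then lo + hi - x else x

theorem reflectIf_involutive (b : Bool) (lo hi : ℤ) : Function.Involutive (reflectIf b lo hi) := by
  intro x
  cases b <;> simp [reflectIf]

theorem axisCoord_eq_reflectIf (a a' : Bool) (lo hi k : ℤ) :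
    axisCoord a' lo hi k = reflectIf (a != a') lo hi (axisCoord a lo hi k) := by
  unfold axisCoord reflectIf
  grind

theorem exists_axisCoord_eq (a : Bool) {lo hi x : ℤ} (hlo : lo ≤ x) (hhi : x ≤ hi) :
    ∃ k < (hi - lo).toNat + 1, axisCoord a lo hi k = x :=
  ⟨(if a then hi - x else x - lo).toNat, by cases a <;> simp <;> omega,
    by cases a <;> simp [axisCoord] <;> omega⟩

/-- `lamAB`, `lamBA`, `lamDC`, `lamCD` are definitionally `cornerString S a b` with `(a, b)`
equal to `(false, false)`, `(true, false)`, `(false, true)`, `(true, true)` respectively. -/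
def cornerString (S : Finset (ℤ × ℤ)) (fromRight fromTop : Bool) : List Bool :=
  snake S (if fromRight then xhi S else xlo S, if fromTop then yhi S else ylo S)
    (0, if fromTop then -1 else 1) (if fromRight then -1 else 1, 0) (mDim S) (nDim S)

theorem mem_iff_of_cornerString_eq {a b a' b' : Bool}
    (h : cornerString S a b = cornerString S a' b') :
    ∀ p, p ∈ S ↔
      (reflectIf (a != a') (xlo S) (xhi S) p.1, reflectIf (b != b') (ylo S) (yhi S) p.2) ∈ S := by
  have cell (a b : Bool) (i k : ℕ) :
      ((if a then xhi S else xlo S) + i * 0 + k * (if a then -1 else 1),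
        (if b then yhi S else ylo S) + i * (if b then -1 else 1) + k * 0) =
      (axisCoord a (xlo S) (xhi S) k, axisCoord b (ylo S) (yhi S) i) := by
    cases a <;> cases b <;> simp [axisCoord, sub_eq_add_neg]
  set T : ℤ × ℤ → ℤ × ℤ :=
    fun p => (reflectIf (a != a') (xlo S) (xhi S) p.1, reflectIf (b != b') (ylo S) (yhi S) p.2)
  have hT : Function.Involutive T := fun p =>
    Prod.ext (reflectIf_involutive _ _ _ _) (reflectIf_involutive _ _ _ _)
  suffices ∀ p ∈ S, T p ∈ S from fun p => ⟨this p, fun hp => hT p ▸ this (T p) hp⟩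
  intro p hp
  obtain ⟨hx₁, hx₂, hy₁, hy₂⟩ := mem_SER hp
  obtain ⟨k, hk, hpk⟩ := exists_axisCoord_eq a hx₁ hx₂
  obtain ⟨i, hi, hpi⟩ := exists_axisCoord_eq b hy₁ hy₂
  have := mem_iff_of_snake_eq_s10 h hi hk
  rw [cell, cell, axisCoord_eq_reflectIf a a', axisCoord_eq_reflectIf b b', hpk, hpi] at this
  exact this.mp hp

theorem reflV_of_cornerString_eq {a b : Bool} (h : cornerString S a b = cornerString S (!a) b) :
    reflV S :=
  ⟨xlo S + xhi S, by simpa [reflectIf] using mem_iff_of_cornerString_eq h⟩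

theorem reflH_of_cornerString_eq {a b : Bool} (h : cornerString S a b = cornerString S a (!b)) :
    reflH S :=
  ⟨ylo S + yhi S, by simpa [reflectIf] using mem_iff_of_cornerString_eq h⟩

theorem rot180_of_cornerString_eq {a b : Bool}
    (h : cornerString S a b = cornerString S (!a) (!b)) : rot180 S :=
  ⟨xlo S + xhi S, ylo S + yhi S, by simpa [reflectIf] using mem_iff_of_cornerString_eq h⟩

end Corners

theorem List.existsUnique_lt_of_ne_nil {α : Type*} [LinearOrder α] {l : List α} (hl : l ≠ []) :
    ∃! w, w ∈ l ∧ ∀ u ∈ l, u ≠ w → u < w := by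
  obtain ⟨w, hw, hmax⟩ := Set.exists_max_image {u | u ∈ l} id l.finite_toSet
    (List.exists_mem_of_ne_nil l hl)
  refine ⟨w, ⟨hw, fun u hu huw => lt_of_le_of_ne (hmax u hu) huw⟩, ?_⟩
  rintro w' ⟨hw', hlt⟩
  by_contra hne
  exact lt_asymm (hlt w hw fun e => hne e.symm) (lt_of_le_of_ne (hmax w' hw') hne)

theorem asymmetric_unique_largest_string_general (S : Finset (ℤ × ℤ))
    (h1 : ¬ reflH S) (h2 : ¬ reflV S)
    (h6 : ¬ rot180 S) :
    ([lamAB S, lamBA S, lamCD S, lamDC S]).Nodup ∧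
    ∃! w : List Bool, w ∈ [lamAB S, lamBA S, lamCD S, lamDC S] ∧
      ∀ u ∈ [lamAB S, lamBA S, lamCD S, lamDC S], u ≠ w → List.Lex (· < ·) u w := by
  have hAB_BA : lamAB S ≠ lamBA S := fun e =>
    h2 (reflV_of_cornerString_eq (a := false) (b := false) e)
  have hCD_DC : lamCD S ≠ lamDC S := fun e =>
    h2 (reflV_of_cornerString_eq (a := true) (b := true) e)
  have hAB_DC : lamAB S ≠ lamDC S := fun e =>
    h1 (reflH_of_cornerString_eq (a := false) (b := false) e)
  have hBA_CD : lamBA S ≠ lamCD S := fun e =>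
    h1 (reflH_of_cornerString_eq (a := true) (b := false) e)
  have hAB_CD : lamAB S ≠ lamCD S := fun e =>
    h6 (rot180_of_cornerString_eq (a := false) (b := false) e)
  have hBA_DC : lamBA S ≠ lamDC S := fun e =>
    h6 (rot180_of_cornerString_eq (a := true) (b := false) e)
  exact ⟨by simp [hAB_BA, hCD_DC, hAB_DC, hBA_CD, hAB_CD, hBA_DC],
    List.existsUnique_lt_of_ne_nil (List.cons_ne_nil _ _)⟩

/-- For an asymmetric configuration whose SER is a proper rectangle (m > n > 1),
the four boustrophedon corner strings are pairwise distinct, and hence there is a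
unique lexicographically largest one. -/
theorem asymmetric_unique_largest_string (S : Finset (ℤ × ℤ)) (hcard : 2 ≤ S.card)
    (hn : 2 ≤ nDim S) (hmn : nDim S < mDim S)
    (h1 : ¬ reflH S) (h2 : ¬ reflV S) (h3 : ¬ reflDiag S) (h4 : ¬ reflAnti S)
    (h5 : ¬ rot90 S) (h6 : ¬ rot180 S) :
    ([lamAB S, lamBA S, lamCD S, lamDC S]).Nodup ∧
    ∃! w : List Bool, w ∈ [lamAB S, lamBA S, lamCD S, lamDC S] ∧
      ∀ u ∈ [lamAB S, lamBA S, lamCD S, lamDC S], u ≠ w → List.Lex (· < ·) u w :=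
  asymmetric_unique_largest_string_general S h1 h2 h6
end

section
/- Suppose inner robots r_1, …, r_k are at distinct positions p_1 < p_2 < … < p_k on ℤ and have distinct targets t_1 < t_2 < … < t_k, where robot r_i is assigned target t_i (order-preserving assignment). If robot r_i moves one step toward t_i only when the adjacent node in that direction is unoccupied, then no two robots ever move to the same node in the same step: if r_i and r_{i+1} both move to a common node v in one synchronous step, a contradiction arises with t_i < t_{i+1}. -/
theorem no_collision_general (k : ℕ) (p t : Fin k → ℤ)
    (ht : StrictMono t)
    (i j : Fin k) (hij : (j : ℕ) = (i : ℕ) + 1)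
    (hadj : p j = p i + 2)
    (hmoveR : p i < t i)
    (hmoveL : t j < p j) :
    False := by
  have htarget : t i < t j := ht (Fin.lt_def.2 (by omega))
  omega

/-- No collision in the order-preserving line rearrangement: two adjacent robots
`r_i` (at `p i`) and `r_{i+1}` (at `p j`, with one empty node `v` between them)
cannot both move to `v`, `r_i` rightward toward its target and `r_{i+1}` leftward
toward its target. -/
theorem no_collision (k : ℕ) (p t : Fin k → ℤ)
    (hp : StrictMono p) (ht : StrictMono t)
    (i j : Fin k) (hij : (j : ℕ) = (i : ℕ) + 1)
    (hadj : p j = p i + 2)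
    (hrempty : ∀ l : Fin k, p l ≠ p i + 1)
    (hmoveR : p i < t i)
    (hmoveL : t j < p j) :
    False :=
  no_collision_general k p t ht i j hij hadj hmoveR hmoveL
end

section
/- Let S ⊆ ℤ², finite, with smallest enclosing rectangle ABCD of dimensions m × n (m ≥ n ≥ 1, corners A bottom-left, B bottom-right, D top-left, C top-right), such that the corner A of the SER is occupied, the top side DC contains exactly one robot r_t (the tail), and r_t is not at D or C unless forced. If r_t moves one step up (S' = (S \ {r_t}) ∪ {r_t + (0,1)}), then in S' the top side of the new SER contains only r_t, and the corners of the new top side are unoccupied except possibly the tail's node; consequently the boustrophedon strings of S' read starting from the new top corners each begin with strictly more leading zeros than the string read from A, so neither new top corner can be the leading corner of S'. -/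
/-!
The tail is the only robot that can reach the new top row, and it lies strictly
between the two new top corners, so both corners are empty; the corner `A` stays occupied because
it lies below the old top row. The three strings all begin with the occupancy bit of their corner,
so the strings from the top corners begin with `0` and the string from `A` with `1`.
-/

lemma snake_succ_succ_eq_cons (S : Finset (ℤ × ℤ)) (c dL dS : ℤ × ℤ) (m n : ℕ) :
    ∃ t, snake S c dL dS (m + 1) (n + 1) = decide (c ∈ S) :: t := by
  simp [snake, List.range_succ_eq_map]

lemma snake_lt_of_notMem_of_mem {S : Finset (ℤ × ℤ)} {c c' : ℤ × ℤ} (hc : c ∉ S) (hc' : c' ∈ S)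
    (dL dS dL' dS' : ℤ × ℤ) (m n : ℕ) :
    ((snake S c' dL' dS' (m + 1) (n + 1)).takeWhile (fun b => b = false)).length <
        ((snake S c dL dS (m + 1) (n + 1)).takeWhile (fun b => b = false)).length ∧
      List.Lex (· < ·) (snake S c dL dS (m + 1) (n + 1)) (snake S c' dL' dS' (m + 1) (n + 1)) := by
  obtain ⟨t, ht⟩ := snake_succ_succ_eq_cons S c dL dS m n
  obtain ⟨t', ht'⟩ := snake_succ_succ_eq_cons S c' dL' dS' m n
  rw [ht, ht', decide_eq_false hc, decide_eq_true hc']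
  exact ⟨by simp, List.Lex.rel (by decide)⟩

lemma snd_le_yhi {S : Finset (ℤ × ℤ)} {p : ℤ × ℤ} (hp : p ∈ S) : p.2 ≤ yhi S := by
  have hne : (S.image Prod.snd).Nonempty := ⟨p.2, Finset.mem_image_of_mem _ hp⟩
  have hyhi : yhi S = (S.image Prod.snd).max' hne := by
    rw [yhi, ← Finset.coe_max' hne, WithBot.unbotD_coe]
  exact hyhi ▸ Finset.le_max' _ _ (Finset.mem_image_of_mem _ hp)

lemma eq_of_mem_insert_erase_of_yhi_lt {S : Finset (ℤ × ℤ)} {p q r : ℤ × ℤ}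
    (hp : p ∈ insert q (S.erase r)) (hpy : yhi S < p.2) : p = q := by
  rcases Finset.mem_insert.mp hp with h | h
  · exact h
  · exact absurd (snd_le_yhi (Finset.mem_of_mem_erase h)) (not_le.mpr hpy)

theorem phaseI_tail_up_general (S : Finset (ℤ × ℤ))
    (hA : (xlo S, ylo S) ∈ S)
    (rt : ℤ × ℤ) (htop : rt.2 = yhi S)
    (hx1 : xlo S < rt.1) (hx2 : rt.1 < xhi S)
    (hy : ylo S < yhi S) :
    let S' : Finset (ℤ × ℤ) := insert (rt.1, yhi S + 1) (S.erase rt)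
    let m' : ℕ := (yhi S + 1 - ylo S).toNat + 1
    let n : ℕ := (xhi S - xlo S).toNat + 1
    let lamA : List Bool := snake S' (xlo S, ylo S) (0, 1) (1, 0) m' n
    let lamD : List Bool := snake S' (xlo S, yhi S + 1) (0, -1) (1, 0) m' n
    let lamC : List Bool := snake S' (xhi S, yhi S + 1) (0, -1) (-1, 0) m' n
    (∀ p ∈ S', p.2 = yhi S + 1 → p = (rt.1, yhi S + 1)) ∧
    (lamA.takeWhile (fun b => b = false)).length < (lamD.takeWhile (fun b => b = false)).length ∧
    (lamA.takeWhile (fun b => b = false)).length < (lamC.takeWhile (fun b => b = false)).length ∧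
    List.Lex (· < ·) lamD lamA ∧ List.Lex (· < ·) lamC lamA := by
  intro S' m' n lamA lamD lamC
  have htopRow : ∀ p ∈ S', p.2 = yhi S + 1 → p = (rt.1, yhi S + 1) := fun p hp hpy =>
    eq_of_mem_insert_erase_of_yhi_lt hp (by omega)
  have hA' : (xlo S, ylo S) ∈ S' :=
    Finset.mem_insert_of_mem <| Finset.mem_erase.mpr ⟨fun h => by simp [← h] at htop; omega, hA⟩
  have hD : (xlo S, yhi S + 1) ∉ S' := fun h => hx1.ne (congrArg Prod.fst (htopRow _ h rfl))
  have hC : (xhi S, yhi S + 1) ∉ S' := fun h => hx2.ne' (congrArg Prod.fst (htopRow _ h rfl))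
  obtain ⟨hDlen, hDlex⟩ := snake_lt_of_notMem_of_mem hD hA' (0, -1) (1, 0) (0, 1) (1, 0) _ _
  obtain ⟨hClen, hClex⟩ := snake_lt_of_notMem_of_mem hC hA' (0, -1) (-1, 0) (0, 1) (1, 0) _ _
  exact ⟨htopRow, hDlen, hClen, hDlex, hClex⟩

/-- Phase I correctness (key step): with the corner `A = (xlo, ylo)` occupied, the
top row of the SER containing only the tail `rt` (strictly inside the top side, and
above the bottom row), after the tail moves one step up the new top row contains only
the tail, the strings from the two new top corners begin with strictly more leading
zeros than the string from `A`, and are lexicographically smaller than it; so neither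
new top corner can be the leading corner. -/
theorem phaseI_tail_up (S : Finset (ℤ × ℤ)) (hS : S.Nonempty)
    (hA : (xlo S, ylo S) ∈ S)
    (rt : ℤ × ℤ) (hrt : rt ∈ S) (htop : rt.2 = yhi S)
    (huniq : ∀ p ∈ S, p.2 = yhi S → p = rt)
    (hx1 : xlo S < rt.1) (hx2 : rt.1 < xhi S)
    (hy : ylo S < yhi S)
    (hmn : xhi S - xlo S ≤ yhi S - ylo S) :
    let S' : Finset (ℤ × ℤ) := insert (rt.1, yhi S + 1) (S.erase rt)
    let m' : ℕ := (yhi S + 1 - ylo S).toNat + 1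
    let n : ℕ := (xhi S - xlo S).toNat + 1
    let lamA : List Bool := snake S' (xlo S, ylo S) (0, 1) (1, 0) m' n
    let lamD : List Bool := snake S' (xlo S, yhi S + 1) (0, -1) (1, 0) m' n
    let lamC : List Bool := snake S' (xhi S, yhi S + 1) (0, -1) (-1, 0) m' n
    (∀ p ∈ S', p.2 = yhi S + 1 → p = (rt.1, yhi S + 1)) ∧
    (lamA.takeWhile (fun b => b = false)).length < (lamD.takeWhile (fun b => b = false)).length ∧
    (lamA.takeWhile (fun b => b = false)).length < (lamC.takeWhile (fun b => b = false)).length ∧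
    List.Lex (· < ·) lamD lamA ∧ List.Lex (· < ·) lamC lamA :=
  phaseI_tail_up_general S hA rt htop hx1 hx2 hy
end
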